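/- For every μ ≠ 0, the function G(α) = Φ(Φ⁻¹(α/2) − μ) + Φ(Φ⁻¹(α/2) + μ) is concave on the interval (0,1). (G(α) is the power at mean μ of the level-α two-sided test of the null hypothesis that a N(θ,1) observation has θ = 0, rejecting when |T| exceeds the two-sided critical value.) -/

import Mathlib

/-!
Writing `c = Φ⁻¹(α/2)`, the inverse function theorem gives
`G'(α) = (φ(c - μ) + φ(c + μ)) / (2 φ(c)) = e^{-μ²/2} cosh(μ c)` for the Gaussian density `φ`.
As `α` increases in `(0,1)`, `c` increases through negative values, so `|μ c|` decreases and
with it `G'`; a function with antitone derivative is concave.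
-/

/-- The standard normal cumulative distribution function. -/
noncomputable def Phi (x : ℝ) : ℝ :=
  ∫ t in Set.Iic x, (Real.sqrt (2 * Real.pi))⁻¹ * Real.exp (-t ^ 2 / 2)

/-- The inverse of the standard normal CDF, mapping (0,1) onto ℝ. -/
noncomputable def PhiInv : ℝ → ℝ := Function.invFun Phi

open Real MeasureTheory ProbabilityTheory Set Filter Topology intervalIntegral

local notation "φ" => gaussianPDFReal 0 1

lemma concaveOn_of_hasDerivAt_of_antitoneOn {s : Set ℝ} (hs : IsOpen s) (hconv : Convex ℝ s)
    {f f' : ℝ → ℝ} (hf : ∀ x ∈ s, HasDerivAt f (f' x) x) (hf' : AntitoneOn f' s) :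
    ConcaveOn ℝ s f := by
  refine AntitoneOn.concaveOn_of_deriv hconv
    (fun x hx => (hf x hx).continuousAt.continuousWithinAt) ?_ ?_ <;> rw [hs.interior_eq]
  · exact fun x hx => (hf x hx).differentiableAt.differentiableWithinAt
  · intro x hx y hy hxy
    rw [(hf x hx).deriv, (hf y hy).deriv]
    exact hf' hx hy hxy

lemma gaussianPDFReal_zero_one (x : ℝ) :
    φ x = (√(2 * π))⁻¹ * exp (-x ^ 2 / 2) := by
  simp [gaussianPDFReal]

lemma continuous_gaussianPDFReal_zero_one : Continuous φ := by
  unfold gaussianPDFReal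
  fun_prop

lemma gaussianPDFReal_zero_one_sub_add_add (c m : ℝ) :
    φ (c - m) + φ (c + m) = 2 * exp (-m ^ 2 / 2) * cosh (m * c) * φ c := by
  simp only [gaussianPDFReal_zero_one, cosh_eq]
  have hsub : exp (-(c - m) ^ 2 / 2) = exp (-m ^ 2 / 2) * exp (m * c) * exp (-c ^ 2 / 2) := by
    rw [← exp_add, ← exp_add]; ring_nf
  have hadd : exp (-(c + m) ^ 2 / 2) = exp (-m ^ 2 / 2) * exp (-(m * c)) * exp (-c ^ 2 / 2) := by
    rw [← exp_add, ← exp_add]; ring_nf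
  rw [hsub, hadd]
  ring

lemma Phi_eq_integral (x : ℝ) : Phi x = ∫ t in Iic x, φ t := by
  simp only [Phi, gaussianPDFReal_zero_one]

lemma Phi_eq_cdf : Phi = cdf (gaussianReal 0 1) := by
  ext x
  rw [cdf_eq_real, measureReal_def, gaussianReal_apply_eq_integral _ one_ne_zero,
    ENNReal.toReal_ofReal (setIntegral_nonneg measurableSet_Iic
      fun t _ => gaussianPDFReal_nonneg 0 1 t), Phi_eq_integral]

lemma hasDerivAt_Phi (x : ℝ) : HasDerivAt Phi (φ x) x := by
  have hint := integrable_gaussianPDFReal 0 1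
  have hPhi : Phi = fun u => Phi 0 + ∫ t in (0 : ℝ)..u, φ t := by
    ext u
    rw [Phi_eq_integral, Phi_eq_integral,
      ← integral_Iic_sub_Iic hint.integrableOn hint.integrableOn]
    ring
  rw [hPhi]
  exact (integral_hasDerivAt_right hint.intervalIntegrable
    (continuous_gaussianPDFReal_zero_one.stronglyMeasurableAtFilter _ _)
    continuous_gaussianPDFReal_zero_one.continuousAt).const_add _

lemma continuous_Phi : Continuous Phi :=
  continuous_iff_continuousAt.2 fun x => (hasDerivAt_Phi x).continuousAt

lemma strictMono_Phi : StrictMono Phi :=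
  strictMono_of_hasDerivAt_pos hasDerivAt_Phi fun x => gaussianPDFReal_pos 0 1 x one_ne_zero

lemma Phi_zero : Phi 0 = 1 / 2 := by
  have hint := integrable_gaussianPDFReal 0 1
  have hsymm : ∫ t in Ioi 0, φ t = Phi 0 := by
    rw [Phi_eq_integral, ← neg_zero, ← integral_comp_neg_Ioi]
    simp [gaussianPDFReal]
  have htotal := integral_Iic_add_Ioi (b := 0) hint.integrableOn hint.integrableOn
  rw [integral_gaussianPDFReal_eq_one 0 one_ne_zero, ← Phi_eq_integral, hsymm] at htotal
  linarith

lemma tendsto_Phi_atBot : Tendsto Phi atBot (𝓝 0) := Phi_eq_cdf ▸ tendsto_cdf_atBot _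

lemma tendsto_Phi_atTop : Tendsto Phi atTop (𝓝 1) := Phi_eq_cdf ▸ tendsto_cdf_atTop _

lemma range_Phi : range Phi = Ioo 0 1 := by
  refine Subset.antisymm ?_ fun y hy => ?_
  · rintro _ ⟨x, rfl⟩
    have h0 : 0 ≤ Phi (x - 1) := Phi_eq_cdf ▸ cdf_nonneg _ _
    have h1 : Phi (x + 1) ≤ 1 := Phi_eq_cdf ▸ cdf_le_one _ _
    exact ⟨h0.trans_lt (strictMono_Phi (sub_one_lt x)),
      (strictMono_Phi (lt_add_one x)).trans_le h1⟩
  · exact mem_range_of_exists_le_of_exists_ge continuous_Phi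
      (tendsto_Phi_atBot.eventually_le_const hy.1).exists
      (tendsto_Phi_atTop.eventually_const_le hy.2).exists

lemma Phi_PhiInv {y : ℝ} (hy : y ∈ Ioo 0 1) : Phi (PhiInv y) = y :=
  Function.invFun_eq (range_Phi.ge hy)

lemma PhiInv_Phi (x : ℝ) : PhiInv (Phi x) = x :=
  Function.leftInverse_invFun strictMono_Phi.injective x

lemma image_PhiInv_Ioo : PhiInv '' Ioo 0 1 = univ :=
  eq_univ_of_forall fun x => ⟨Phi x, range_Phi ▸ mem_range_self x, PhiInv_Phi x⟩

lemma monotoneOn_PhiInv : MonotoneOn PhiInv (Ioo 0 1) := fun y hy z hz hyz =>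
  strictMono_Phi.le_iff_le.1 (by rwa [Phi_PhiInv hy, Phi_PhiInv hz])

lemma PhiInv_neg {y : ℝ} (hy : y ∈ Ioo 0 (1 / 2)) : PhiInv y < 0 := by
  refine strictMono_Phi.lt_iff_lt.1 ?_
  rw [Phi_PhiInv ⟨hy.1, by linarith [hy.2]⟩, Phi_zero]
  exact hy.2

lemma hasDerivAt_PhiInv {y : ℝ} (hy : y ∈ Ioo 0 1) :
    HasDerivAt PhiInv (φ (PhiInv y))⁻¹ y := by
  have hnhds : Ioo 0 1 ∈ 𝓝 y := isOpen_Ioo.mem_nhds hy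
  refine HasDerivAt.of_local_left_inverse ?_ (hasDerivAt_Phi _)
    (gaussianPDFReal_pos 0 1 _ one_ne_zero).ne' (eventually_of_mem hnhds fun z hz => Phi_PhiInv hz)
  exact continuousAt_of_monotoneOn_of_image_mem_nhds monotoneOn_PhiInv hnhds
    (by rw [image_PhiInv_Ioo]; exact univ_mem)

noncomputable def twoSidedTestPower (μ α : ℝ) : ℝ :=
  Phi (PhiInv (α / 2) - μ) + Phi (PhiInv (α / 2) + μ)

lemma hasDerivAt_twoSidedTestPower (μ : ℝ) {α : ℝ} (hα : α / 2 ∈ Ioo 0 1) :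
    HasDerivAt (twoSidedTestPower μ) (exp (-μ ^ 2 / 2) * cosh (μ * PhiInv (α / 2))) α := by
  set c := PhiInv (α / 2)
  have hc : HasDerivAt (fun a => PhiInv (a / 2)) ((φ c)⁻¹ * (1 / 2)) α :=
    (hasDerivAt_PhiInv hα).comp α ((hasDerivAt_id α).div_const 2)
  refine (((hasDerivAt_Phi (c - μ)).comp α (hc.sub_const μ)).add
    ((hasDerivAt_Phi (c + μ)).comp α (hc.add_const μ))).congr_deriv ?_
  rw [← add_mul, gaussianPDFReal_zero_one_sub_add_add]
  field_simp [(gaussianPDFReal_pos 0 1 c one_ne_zero).ne']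

lemma div_two_mem_Ioo {α : ℝ} (hα : α ∈ Ioo 0 1) : α / 2 ∈ Ioo 0 (1 / 2) :=
  ⟨by linarith [hα.1], by linarith [hα.2]⟩

lemma antitoneOn_deriv_twoSidedTestPower (μ : ℝ) :
    AntitoneOn (fun α => exp (-μ ^ 2 / 2) * cosh (μ * PhiInv (α / 2))) (Ioo 0 1) := by
  intro a ha b hb hab
  have hab' : PhiInv (a / 2) ≤ PhiInv (b / 2) :=
    monotoneOn_PhiInv (Ioo_subset_Ioo_right (by norm_num) (div_two_mem_Ioo ha))
      (Ioo_subset_Ioo_right (by norm_num) (div_two_mem_Ioo hb)) (by linarith)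
  have hb' : PhiInv (b / 2) < 0 := PhiInv_neg (div_two_mem_Ioo hb)
  refine mul_le_mul_of_nonneg_left (cosh_le_cosh.2 ?_) (exp_pos _).le
  rw [abs_mul, abs_mul, abs_of_neg hb', abs_of_neg (hab'.trans_lt hb')]
  gcongr

theorem stmt_4_general (μ : ℝ) :
    ConcaveOn ℝ (Set.Ioo (0 : ℝ) 1)
      (fun α => Phi (PhiInv (α / 2) - μ) + Phi (PhiInv (α / 2) + μ)) :=
  concaveOn_of_hasDerivAt_of_antitoneOn isOpen_Ioo (convex_Ioo 0 1)
    (fun _ hα => hasDerivAt_twoSidedTestPower μ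
      (Ioo_subset_Ioo_right (by norm_num) (div_two_mem_Ioo hα)))
    (antitoneOn_deriv_twoSidedTestPower μ)

/-- For every `μ ≠ 0`, the power function `G(α) = Φ(Φ⁻¹(α/2) − μ) + Φ(Φ⁻¹(α/2) + μ)`
of the level-α two-sided Gaussian test is concave on `(0,1)`. -/
theorem stmt_4 (μ : ℝ) (hμ : μ ≠ 0) :
    ConcaveOn ℝ (Set.Ioo (0 : ℝ) 1)
      (fun α => Phi (PhiInv (α / 2) - μ) + Phi (PhiInv (α / 2) + μ)) :=
  stmt_4_general μ
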